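/- arXiv:2010.14663 — 3 statements merged into one kernel-verified Lean document; each statement's English description precedes it below -/
import Mathlib

section
/- Let k ≥ 1 and n ≥ 1, and let u and v be words of length n over Σ_k. Then lso(u,v) + lso(v,u) ≤ 4n/3. -/
/-!
Let `b` be a shortest right-border of `(u,v)` and `c` a shortest right-border of `(v,u)`, with
`|c| ≤ |b|`. Any border of `b` would be a shorter right-border of `(u,v)`, so `b` is unbordered.
In `u` the word `c` is a prefix and `b` a suffix, in `v` the roles are swapped; if
`2|b| + |c| > 2n` the two overlaps of `b` and `c`, each of length `|b| + |c| - n`, overlap inside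
`c` in `2|b| + |c| - 2n` letters, which gives a border of `b`. Hence `2|b| + |c| ≤ 2n`, and
`3(|b| + |c|) ≤ 2(2|b| + |c|)` since `|c| ≤ |b|`.
-/


open Classical Finset Filter

/-- A border of `w`: a non-empty word that is both a proper prefix and a suffix of `w`. -/
def IsBorder {k : ℕ} (w b : List (Fin k)) : Prop :=
  b ≠ [] ∧ b ≠ w ∧ b <+: w ∧ b <:+ w

/-- A word is unbordered if it has no border. -/
def Unbordered {k : ℕ} (w : List (Fin k)) : Prop :=
  ∀ b, ¬ IsBorder w b

/-- A right-border of `(u,v)`: a non-empty proper suffix of `u` that is a proper prefix of `v`. -/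
def IsRightBorder {k : ℕ} (u v b : List (Fin k)) : Prop :=
  b ≠ [] ∧ b <:+ u ∧ b ≠ u ∧ b <+: v ∧ b ≠ v

/-- A left-border of `(u,v)`: a non-empty proper prefix of `u` that is a proper suffix of `v`. -/
def IsLeftBorder {k : ℕ} (u v b : List (Fin k)) : Prop :=
  b ≠ [] ∧ b <+: u ∧ b ≠ u ∧ b <:+ v ∧ b ≠ v

def MutuallyBordered {k : ℕ} (u v : List (Fin k)) : Prop :=
  (∃ b, IsRightBorder u v b) ∧ (∃ b, IsLeftBorder u v b)

def MutuallyUnbordered {k : ℕ} (u v : List (Fin k)) : Prop :=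
  (¬ ∃ b, IsRightBorder u v b) ∧ (¬ ∃ b, IsLeftBorder u v b)

def RightBordered {k : ℕ} (u v : List (Fin k)) : Prop :=
  (∃ b, IsRightBorder u v b) ∧ (¬ ∃ b, IsLeftBorder u v b)

/-- `lso u v`: the length of the shortest right-border of `(u,v)`, or `0` if there is none. -/
noncomputable def lso {k : ℕ} (u v : List (Fin k)) : ℕ :=
  sInf {m | ∃ b : List (Fin k), IsRightBorder u v b ∧ b.length = m}

def IsShortestRightBorder {k : ℕ} (u v b : List (Fin k)) : Prop :=
  IsRightBorder u v b ∧ ∀ b', IsRightBorder u v b' → b.length ≤ b'.length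

def IsShortestLeftBorder {k : ℕ} (u v b : List (Fin k)) : Prop :=
  IsLeftBorder u v b ∧ ∀ b', IsLeftBorder u v b' → b.length ≤ b'.length

/-- The finite set of all length-`n` words over `Σ_k`. -/
def Words (k n : ℕ) : Finset (List (Fin k)) :=
  (Finset.univ : Finset (Fin n → Fin k)).image List.ofFn

/-- `UB k n`: the number of unbordered words of length `n` over `Σ_k`. -/
noncomputable def UB (k n : ℕ) : ℕ :=
  ((Words k n).filter Unbordered).card

/-- `M k n`: the number of mutually bordered pairs of length-`n` words over `Σ_k`. -/
noncomputable def M (k n : ℕ) : ℕ :=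
  ((Words k n ×ˢ Words k n).filter (fun p => MutuallyBordered p.1 p.2)).card

/-- `R k n`: the number of right-bordered pairs of length-`n` words over `Σ_k`. -/
noncomputable def R (k n : ℕ) : ℕ :=
  ((Words k n ×ˢ Words k n).filter (fun p => RightBordered p.1 p.2)).card

/-- `U k n`: the number of mutually unbordered pairs of length-`n` words over `Σ_k`. -/
noncomputable def U (k n : ℕ) : ℕ :=
  ((Words k n ×ˢ Words k n).filter (fun p => MutuallyUnbordered p.1 p.2)).card

/-- `G u v m`: the number of unbordered words of length `m` over `Σ_k` having
`u` as a prefix and `v` as a suffix. -/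
noncomputable def G {k : ℕ} (u v : List (Fin k)) (m : ℕ) : ℕ :=
  ((Words k m).filter (fun w => Unbordered w ∧ u <+: w ∧ v <:+ w)).card

namespace List

variable {α : Type*}

theorem IsPrefix.exists_overlap {x y w : List α} (hx : x <+: w) (hy : y <:+ w) :
    ∃ z, z <:+ x ∧ z <+: y ∧ z.length = x.length + y.length - w.length := by
  rw [prefix_iff_eq_take.mp hx, suffix_iff_eq_drop.mp hy]
  refine ⟨(w.take x.length).drop (w.length - y.length), drop_suffix _ _, ?_, ?_⟩
  · rw [drop_take]
    exact take_prefix _ _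
  · have := hx.length_le
    have := hy.length_le
    simp only [length_drop, length_take]
    omega

/-- The overlap of `c` with `b` inside `u` is a prefix of `b`, that of `b` with `c` inside `v` is a
suffix of `b`, and these two overlap inside `c`. -/
theorem exists_prefix_suffix_of_crossed_overlaps {u v b c : List α} (hbu : b <:+ u)
    (hcu : c <+: u) (hbv : b <+: v) (hcv : c <:+ v) (huv : u.length = v.length) :
    ∃ z, z <+: b ∧ z <:+ b ∧ z.length = 2 * b.length + c.length - 2 * u.length := by
  obtain ⟨x, hxc, hxb, hx⟩ := hcu.exists_overlap hbu
  obtain ⟨y, hyb, hyc, hy⟩ := hbv.exists_overlap hcv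
  obtain ⟨z, hzy, hzx, hz⟩ := hyc.exists_overlap hxc
  have := hbu.length_le
  refine ⟨z, hzx.trans hxb, hzy.trans hyb, ?_⟩
  omega

end List

section Borders

variable {k : ℕ} {u v b c d : List (Fin k)}

theorem lso_le_length_of_isRightBorder (h : IsRightBorder u v b) : lso u v ≤ b.length :=
  Nat.sInf_le ⟨b, h, rfl⟩

theorem exists_isRightBorder_length_eq_lso (h : lso u v ≠ 0) :
    ∃ b, IsRightBorder u v b ∧ b.length = lso u v := by
  rcases Set.eq_empty_or_nonempty {m | ∃ b : List (Fin k), IsRightBorder u v b ∧ b.length = m}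
    with he | he
  · exact absurd (by rw [lso, he, Nat.sInf_empty]) h
  · exact Nat.sInf_mem he

theorem lso_le_length (u v : List (Fin k)) : lso u v ≤ u.length := by
  by_cases h : lso u v = 0
  · omega
  obtain ⟨b, hb, hlen⟩ := exists_isRightBorder_length_eq_lso h
  exact hlen ▸ hb.2.1.length_le

theorem IsBorder.length_lt (h : IsBorder b d) : d.length < b.length :=
  lt_of_le_of_ne h.2.2.1.length_le fun hlen => h.2.1 (h.2.2.1.eq_of_length hlen)

theorem IsRightBorder.length_lt (h : IsRightBorder u v b) : b.length < u.length :=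
  lt_of_le_of_ne h.2.1.length_le fun hlen => h.2.2.1 (h.2.1.eq_of_length hlen)

theorem IsRightBorder.of_isBorder (h : IsRightBorder u v b) (hd : IsBorder b d) :
    IsRightBorder u v d := by
  obtain ⟨-, hbu, -, hbv, -⟩ := h
  have hlt := hd.length_lt
  refine ⟨hd.1, hd.2.2.2.trans hbu, ?_, hd.2.2.1.trans hbv, ?_⟩
  · rintro rfl
    exact absurd hbu.length_le (by omega)
  · rintro rfl
    exact absurd hbv.length_le (by omega)

theorem IsRightBorder.unbordered_of_length_eq_lso (h : IsRightBorder u v b)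
    (hlen : b.length = lso u v) : Unbordered b := fun d hd =>
  absurd (lso_le_length_of_isRightBorder (h.of_isBorder hd)) (by have := hd.length_lt; omega)

theorem IsRightBorder.not_unbordered_of_lt (hb : IsRightBorder u v b) (hc : IsRightBorder v u c)
    (huv : u.length = v.length) (hlen : 2 * u.length < 2 * b.length + c.length) :
    ¬ Unbordered b := by
  obtain ⟨z, hzp, hzs, hz⟩ :=
    List.exists_prefix_suffix_of_crossed_overlaps hb.2.1 hc.2.2.2.1 hb.2.2.2.1 hc.2.1 huv
  have hbn := hb.length_lt
  have hcn := hc.length_lt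
  refine fun hub => hub z ⟨?_, ?_, hzp, hzs⟩
  · rintro rfl
    simp only [List.length_nil] at hz
    omega
  · rintro rfl
    omega

theorem two_mul_lso_add_lso_le (huv : u.length = v.length) (hle : lso v u ≤ lso u v) :
    2 * lso u v + lso v u ≤ 2 * u.length := by
  have := lso_le_length u v
  by_cases h0 : lso v u = 0
  · omega
  obtain ⟨b, hb, hblen⟩ := exists_isRightBorder_length_eq_lso (u := u) (v := v) (by omega)
  obtain ⟨c, hc, hclen⟩ := exists_isRightBorder_length_eq_lso h0
  by_contra hlt
  exact hb.not_unbordered_of_lt hc huv (by omega) (hb.unbordered_of_length_eq_lso hblen)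

end Borders

theorem stmt3_general (k n : ℕ) (u v : List (Fin k))
    (hu : u.length = n) (hv : v.length = n) :
    3 * (lso u v + lso v u) ≤ 4 * n := by
  rcases le_total (lso v u) (lso u v) with hle | hle
  · have := two_mul_lso_add_lso_le (hu.trans hv.symm) hle
    omega
  · have := two_mul_lso_add_lso_le (hv.trans hu.symm) hle
    omega

theorem stmt3 (k n : ℕ) (hk : 1 ≤ k) (hn : 1 ≤ n) (u v : List (Fin k))
    (hu : u.length = n) (hv : v.length = n) :
    3 * (lso u v + lso v u) ≤ 4 * n :=
  stmt3_general k n u v hu hv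
end

section
/- Let k ≥ 1, t ≥ 1 and n ≥ 1. Let (u,v) and (u',v') be two pairs of words of length t over Σ_k such that (u,v) is mutually unbordered with u ≠ v, and (u',v') is mutually unbordered with u' ≠ v'. Then the number of unbordered words of length n over Σ_k having u as a prefix and v as a suffix equals the number of unbordered words of length n over Σ_k having u' as a prefix and v' as a suffix; i.e., G_{u,v}(n) = G_{u',v'}(n) depends only on t and n. -/
open Classical Finset Filter

lemma mem_Words {k n : ℕ} {w : List (Fin k)} : w ∈ Words k n ↔ w.length = n := by
  constructor
  · intro hw
    simp only [Words, Finset.mem_image] at hw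
    obtain ⟨f, _, rfl⟩ := hw
    simp
  · intro h
    subst h
    simp only [Words, Finset.mem_image]
    exact ⟨w.get, Finset.mem_univ _, List.ofFn_get w⟩

lemma card_Words (k n : ℕ) : (Words k n).card = k ^ n := by
  rw [Words, Finset.card_image_of_injective _ List.ofFn_injective, Finset.card_univ]
  simp

lemma decomp {k : ℕ} {a c w : List (Fin k)} (ha : a <+: w) (hc : c <:+ w)
    (h : a.length + c.length ≤ w.length) : ∃ x, w = a ++ x ++ c := by
  obtain ⟨l, hl⟩ := hc
  have hlw : l <+: w := ⟨c, hl⟩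
  have hlen : l.length + c.length = w.length := by
    have := congrArg List.length hl; simpa using this
  have hal : a <+: l := List.prefix_of_prefix_length_le ha hlw (by omega)
  obtain ⟨x, hx⟩ := hal
  exact ⟨x, by rw [← hl, ← hx]⟩

lemma card_sandwich {k : ℕ} (a c : List (Fin k)) (n : ℕ) (h : a.length + c.length ≤ n) :
    ((Words k n).filter (fun w => a <+: w ∧ c <:+ w)).card = k ^ (n - a.length - c.length) := by
  rw [← card_Words k (n - a.length - c.length)]
  symm
  apply Finset.card_bij (fun x _ => a ++ x ++ c)
  · intro x hx
    rw [mem_Words] at hx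
    simp only [Finset.mem_filter, mem_Words, List.length_append]
    refine ⟨by omega, ?_, List.suffix_append _ _⟩
    rw [List.append_assoc]; exact List.prefix_append _ _
  · intro x1 h1 x2 h2 he
    simpa using he
  · intro w hw
    simp only [Finset.mem_filter, mem_Words] at hw
    obtain ⟨hlen, hp, hs⟩ := hw
    obtain ⟨x, rfl⟩ := decomp hp hs (by omega)
    refine ⟨x, ?_, rfl⟩
    rw [mem_Words]
    simp only [List.length_append] at hlen ⊢
    omega

lemma ne_of_length_ne {k : ℕ} {a b : List (Fin k)} (h : a.length ≠ b.length) : a ≠ b :=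
  fun he => h (he ▸ rfl)

/-- No word of length `< 2t` has `u` as prefix and `v` as suffix. -/
lemma no_short {k t : ℕ} {u v : List (Fin k)} (hu : u.length = t) (hv : v.length = t)
    (hmu : MutuallyUnbordered u v) (hne : u ≠ v)
    {w : List (Fin k)} (hp : u <+: w) (hs : v <:+ w) (hlt : w.length < t + t) : False := by
  have htle : t ≤ w.length := hu ▸ hp.length_le
  rcases eq_or_lt_of_le htle with heq | hlt2
  · have h1 : u = w := hp.eq_of_length (by omega)
    have h2 : v = w := hs.eq_of_length (by omega)
    exact hne (h1.trans h2.symm)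
  · obtain ⟨l, hl⟩ := hs
    have hllen : l.length + t = w.length := by
      have := congrArg List.length hl; simp [hv] at this; omega
    have hlu : l <+: u := List.prefix_of_prefix_length_le ⟨v, hl⟩ hp (by omega)
    obtain ⟨z, hz⟩ := hlu
    have hzlen : l.length + z.length = t := by
      have := congrArg List.length hz; simpa [hu] using this
    obtain ⟨r, hr⟩ := hp
    have hzp : z <+: v := by
      refine ⟨r, ?_⟩
      have e1 : l ++ (z ++ r) = w := by rw [← List.append_assoc, hz, hr]
      have e2 : l ++ v = w := hl
      exact (List.append_cancel_left (e1.trans e2.symm))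
    apply hmu.1
    refine ⟨z, ?_, ⟨l, hz⟩, ?_, hzp, ?_⟩
    · intro h; subst h; simp at hzlen; omega
    · exact ne_of_length_ne (by simp [hu]; omega)
    · exact ne_of_length_ne (by simp [hv]; omega)

/-- Any border of a word with prefix `u` and suffix `v` contains `u` as prefix,
`v` as suffix, and has length `≥ 2t`. -/
lemma border_struct {k t : ℕ} {u v : List (Fin k)} (hu : u.length = t) (hv : v.length = t)
    (hmu : MutuallyUnbordered u v) (hne : u ≠ v)
    {w b : List (Fin k)} (hp : u <+: w) (hs : v <:+ w) (hb : IsBorder w b) :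
    u <+: b ∧ v <:+ b ∧ t + t ≤ b.length := by
  obtain ⟨hne0, hnew, hbp, hbs⟩ := hb
  rcases lt_or_ge b.length t with h | h
  · exfalso
    apply hmu.2
    refine ⟨b, hne0, List.prefix_of_prefix_length_le hbp hp (by omega),
      ne_of_length_ne (by omega), List.suffix_of_suffix_length_le hbs hs (by omega),
      ne_of_length_ne (by omega)⟩
  · have h1 : u <+: b := List.prefix_of_prefix_length_le hp hbp (by omega)
    have h2 : v <:+ b := List.suffix_of_suffix_length_le hs hbs (by omega)
    refine ⟨h1, h2, ?_⟩
    by_contra hlt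
    push_neg at hlt
    exact no_short hu hv hmu hne h1 h2 hlt

lemma border_length_lt {k : ℕ} {w b : List (Fin k)} (hb : IsBorder w b) :
    b.length < w.length :=
  lt_of_le_of_ne hb.2.2.1.length_le (fun he => hb.2.1 (hb.2.2.1.eq_of_length he))

/-- An unbordered border `b` of `w` satisfies `2|b| ≤ |w|`. -/
lemma unbordered_border_le {k : ℕ} {w b : List (Fin k)} (hb : IsBorder w b)
    (hub : Unbordered b) : b.length + b.length ≤ w.length := by
  by_contra h
  push_neg at h
  obtain ⟨hne0, hnew, hbp, hbs⟩ := hb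
  have hblt : b.length < w.length := border_length_lt ⟨hne0, hnew, hbp, hbs⟩
  obtain ⟨s, hs⟩ := hbp
  obtain ⟨p, hpw⟩ := hbs
  have hplen : p.length + b.length = w.length := by
    have := congrArg List.length hpw; simpa using this
  have hpb : p <+: b := List.prefix_of_prefix_length_le ⟨b, hpw⟩ ⟨s, hs⟩ (by omega)
  obtain ⟨q, hq⟩ := hpb
  have hqlen : p.length + q.length = b.length := by
    have := congrArg List.length hq; simpa using this
  have key : q ++ s = b := by
    have e1 : p ++ (q ++ s) = w := by rw [← List.append_assoc, hq, hs]
    have e2 : p ++ b = w := hpw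
    exact List.append_cancel_left (e1.trans e2.symm)
  apply hub q
  refine ⟨?_, ?_, ⟨s, key⟩, ⟨p, hq⟩⟩
  · intro h'; subst h'; simp at hqlen; omega
  · exact ne_of_length_ne (by omega)

lemma border_trans {k : ℕ} {w b c : List (Fin k)} (hc : IsBorder b c) (hb : IsBorder w b) :
    IsBorder w c := by
  obtain ⟨h1, h2, h3, h4⟩ := hc
  refine ⟨h1, ?_, h3.trans hb.2.2.1, h4.trans hb.2.2.2⟩
  have : c.length < b.length := border_length_lt ⟨h1, h2, h3, h4⟩
  have : b.length < w.length := border_length_lt hb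
  exact ne_of_length_ne (by omega)

/-- Every bordered word has a shortest border, which is unbordered. -/
lemma exists_shortest {k : ℕ} {w : List (Fin k)} (h : ¬ Unbordered w) :
    ∃ b, IsBorder w b ∧ Unbordered b := by
  rw [Unbordered] at h
  push_neg at h
  obtain ⟨b0, hb0⟩ := h
  have hne : {m | ∃ b : List (Fin k), IsBorder w b ∧ b.length = m}.Nonempty :=
    ⟨b0.length, b0, hb0, rfl⟩
  obtain ⟨b, hb, hblen⟩ := Nat.sInf_mem hne
  refine ⟨b, hb, ?_⟩
  intro c hc
  have hcw : IsBorder w c := border_trans hc hb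
  have hle : sInf {m | ∃ b : List (Fin k), IsBorder w b ∧ b.length = m} ≤ c.length :=
    Nat.sInf_le ⟨c, hcw, rfl⟩
  have hlt : c.length < b.length := border_length_lt hc
  omega

/-- Two unbordered nonempty words both prefix and suffix of the same word are equal. -/
lemma unb_eq {k : ℕ} {w b1 b2 : List (Fin k)}
    (h1ne : b1 ≠ []) (h2ne : b2 ≠ []) (hu1 : Unbordered b1) (hu2 : Unbordered b2)
    (p1 : b1 <+: w) (s1 : b1 <:+ w) (p2 : b2 <+: w) (s2 : b2 <:+ w) : b1 = b2 := by
  have key : ∀ (a b : List (Fin k)), a ≠ [] → Unbordered b →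
      a <+: w → a <:+ w → b <+: w → b <:+ w → a.length ≤ b.length → a = b := by
    intro a b hane hub hap has hbp hbs hlen
    by_contra hne
    exact hub a ⟨hane, hne, List.prefix_of_prefix_length_le hap hbp hlen,
      List.suffix_of_suffix_length_le has hbs hlen⟩
  rcases le_total b1.length b2.length with h | h
  · exact key b1 b2 h1ne hu2 p1 s1 p2 s2 h
  · exact (key b2 b1 h2ne hu1 p2 s2 p1 s1 h).symm

lemma pref_ne_nil {k t : ℕ} {u b : List (Fin k)} (hu : u.length = t) (ht : 1 ≤ t)
    (h : u <+: b) : b ≠ [] := by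
  intro he
  subst he
  have h0 : u.length ≤ 0 := by simpa using h.length_le
  omega

lemma G_small {k t : ℕ} {u v : List (Fin k)} (hu : u.length = t) (hv : v.length = t)
    (hmu : MutuallyUnbordered u v) (hne : u ≠ v) (N : ℕ) (hN : N < t + t) :
    G u v N = 0 := by
  rw [G, Finset.card_eq_zero, Finset.filter_eq_empty_iff]
  rintro w hw ⟨hub, hp, hs⟩
  exact no_short hu hv hmu hne hp hs (by rw [mem_Words.mp hw]; exact hN)

lemma main_id {k t : ℕ} {u v : List (Fin k)} (ht : 1 ≤ t)
    (hu : u.length = t) (hv : v.length = t)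
    (hmu : MutuallyUnbordered u v) (hne : u ≠ v)
    (n : ℕ) (hn : t + t ≤ n) :
    G u v n + ∑ m ∈ Finset.range (n/2 + 1), G u v m * k ^ (n - m - m) = k ^ (n - t - t) := by
  classical
  have hsplit := Finset.card_filter_add_card_filter_not
    (s := (Words k n).filter (fun w => u <+: w ∧ v <:+ w)) (p := fun w => Unbordered w)
  have e1 : ((Words k n).filter (fun w => u <+: w ∧ v <:+ w)).filter (fun w => Unbordered w)
      = (Words k n).filter (fun w => Unbordered w ∧ u <+: w ∧ v <:+ w) := by
    ext w
    simp only [Finset.mem_filter]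
    tauto
  have hS : ((Words k n).filter (fun w => u <+: w ∧ v <:+ w)).card = k ^ (n - t - t) := by
    have := card_sandwich u v n (by omega)
    rwa [hu, hv] at this
  have hB : ((Words k n).filter (fun w => u <+: w ∧ v <:+ w)).filter (fun w => ¬ Unbordered w)
      = (Finset.range (n/2+1)).biUnion (fun m =>
          ((Words k m).filter (fun b => Unbordered b ∧ u <+: b ∧ v <:+ b)).biUnion
            (fun b => (Words k n).filter (fun w => b <+: w ∧ b <:+ w))) := by
    ext w
    simp only [Finset.mem_filter, Finset.mem_biUnion, Finset.mem_range, mem_Words]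
    constructor
    · rintro ⟨⟨hwn, hp, hs⟩, hnub⟩
      obtain ⟨b, hb, hub⟩ := exists_shortest hnub
      obtain ⟨hup, hvs, h2t⟩ := border_struct hu hv hmu hne hp hs hb
      have hle := unbordered_border_le hb hub
      exact ⟨b.length, by omega, b, ⟨rfl, hub, hup, hvs⟩, hwn, hb.2.2.1, hb.2.2.2⟩
    · rintro ⟨m, hm, b, ⟨hbm, hub, hup, hvs⟩, hwn, hbp, hbs⟩
      have hbne : b ≠ [] := pref_ne_nil hu ht hup
      have hbl : 0 < b.length := List.length_pos_iff.mpr hbne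
      have hBd : IsBorder w b := ⟨hbne, ne_of_length_ne (by omega), hbp, hbs⟩
      exact ⟨⟨hwn, hup.trans hbp, hvs.trans hbs⟩, fun hUB => hUB b hBd⟩
  have hcard : (((Words k n).filter (fun w => u <+: w ∧ v <:+ w)).filter
        (fun w => ¬ Unbordered w)).card
      = ∑ m ∈ Finset.range (n/2+1), G u v m * k ^ (n - m - m) := by
    rw [hB]
    rw [Finset.card_biUnion]
    · apply Finset.sum_congr rfl
      intro m hm
      rw [Finset.mem_range] at hm
      rw [Finset.card_biUnion]
      · calc ∑ b ∈ (Words k m).filter (fun b => Unbordered b ∧ u <+: b ∧ v <:+ b),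
              ((Words k n).filter (fun w => b <+: w ∧ b <:+ w)).card
            = ∑ b ∈ (Words k m).filter (fun b => Unbordered b ∧ u <+: b ∧ v <:+ b),
              k ^ (n - m - m) := by
              apply Finset.sum_congr rfl
              intro b hb
              simp only [Finset.mem_filter, mem_Words] at hb
              have hbm : b.length = m := hb.1
              have h2 : b.length + b.length ≤ n := by omega
              rw [card_sandwich b b n h2, hbm]
          _ = G u v m * k ^ (n - m - m) := by
              rw [Finset.sum_const, smul_eq_mul, G]
      · intro b1 hb1 b2 hb2 hne12
        simp only [Finset.mem_coe, Finset.mem_filter, mem_Words] at hb1 hb2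
        rw [Function.onFun, Finset.disjoint_left]
        intro w hw1 hw2
        simp only [Finset.mem_filter] at hw1 hw2
        exact hne12 (unb_eq (pref_ne_nil hu ht hb1.2.2.1) (pref_ne_nil hu ht hb2.2.2.1)
          hb1.2.1 hb2.2.1 hw1.2.1 hw1.2.2 hw2.2.1 hw2.2.2)
    · intro m1 hm1 m2 hm2 hne12
      rw [Function.onFun, Finset.disjoint_left]
      intro w hw1 hw2
      simp only [Finset.mem_biUnion, Finset.mem_filter, mem_Words] at hw1 hw2
      obtain ⟨b1, hb1, hwb1⟩ := hw1
      obtain ⟨b2, hb2, hwb2⟩ := hw2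
      have heq : b1 = b2 := unb_eq (pref_ne_nil hu ht hb1.2.2.1) (pref_ne_nil hu ht hb2.2.2.1)
        hb1.2.1 hb2.2.1 hwb1.2.1 hwb1.2.2 hwb2.2.1 hwb2.2.2
      apply hne12
      rw [← hb1.1, ← hb2.1, heq]
  have eG : G u v n
      = (((Words k n).filter (fun w => u <+: w ∧ v <:+ w)).filter (fun w => Unbordered w)).card := by
    rw [e1, G]
  omega

theorem stmt6 (k t n : ℕ) (hk : 1 ≤ k) (ht : 1 ≤ t) (hn : 1 ≤ n)
    (u v u' v' : List (Fin k))
    (hu : u.length = t) (hv : v.length = t)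
    (hu' : u'.length = t) (hv' : v'.length = t)
    (hmu : MutuallyUnbordered u v) (hne : u ≠ v)
    (hmu' : MutuallyUnbordered u' v') (hne' : u' ≠ v') :
    G u v n = G u' v' n := by
  suffices H : ∀ N, G u v N = G u' v' N by exact H n
  intro N
  induction N using Nat.strong_induction_on with
  | _ N ih =>
    rcases lt_or_ge N (t + t) with hlt | hge
    · rw [G_small hu hv hmu hne N hlt, G_small hu' hv' hmu' hne' N hlt]
    · have h1 := main_id ht hu hv hmu hne N hge
      have h2 := main_id ht hu' hv' hmu' hne' N hge
      have hsum : ∑ m ∈ Finset.range (N/2+1), G u v m * k ^ (N - m - m)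
          = ∑ m ∈ Finset.range (N/2+1), G u' v' m * k ^ (N - m - m) := by
        apply Finset.sum_congr rfl
        intro m hm
        rw [Finset.mem_range] at hm
        rw [ih m (by omega)]
      omega
end

section
/- Let k ≥ 1 and n ≥ 1. Then M_k(n) = Σ_{i=1}^{n−1} Σ_{j=1}^{n−i} u_i·u_j·k^{2n−2(i+j)} + Σ_{p=1}^{⌊n/3⌋} Σ_{(x,y)} Σ_{l=2p}^{n−p} G_{y,x}(l)·G_{x,y}(n−l+p), where the middle sum in the second term is over all ordered pairs (x,y) of distinct words of length p over Σ_k such that (x,y) is mutually unbordered, and M_k(1) = 0. -/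
open Classical Finset Filter

/-!
A mutually bordered pair `(u, v)` has a unique unbordered right border `A` (its shortest one)
and a unique unbordered left border `B`, and the pair is determined by `A`, `B` and the way they
sit in `u` and `v`. If `|A| + |B| ≤ n`, then `u = B a A` and `v = A b B` with arbitrary middle words
`a`, `b`; this gives the first sum. Otherwise `A` and `B` overlap in `p = |A| + |B| - n` letters:
`u = B ++ A.drop p` and `v = A ++ B.drop p`, where `x = B.take p` is a suffix of `A` and
`y = A.take p` is a suffix of `B`. Since `A` and `B` are unbordered, `2p ≤ |A|, |B|` (so `3p ≤ n`)
and `(x, y)` is a mutually unbordered pair of distinct words; conversely every such datum glues to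
a mutually bordered pair, which gives the second sum.
-/

namespace List

variable {α : Type*} {w A B x y : List α}

lemma exists_eq_append_append_of_prefix_of_suffix (hB : B <+: w) (hA : A <:+ w)
    (h : B.length + A.length ≤ w.length) : ∃ a, w = B ++ a ++ A := by
  obtain ⟨s, rfl⟩ := hB
  have hAs : A <:+ s :=
    suffix_of_suffix_length_le hA (suffix_append B s) (by simp only [length_append] at h; omega)
  obtain ⟨a, rfl⟩ := hAs
  exact ⟨a, (append_assoc _ _ _).symm⟩

lemma eq_append_drop_of_prefix_of_suffix (hB : B <+: w) (hA : A <:+ w) {p : ℕ}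
    (hp : A.length + B.length = w.length + p) : w = B ++ A.drop p ∧ A.take p <:+ B := by
  obtain ⟨s, rfl⟩ := hB
  obtain ⟨t, ht⟩ := hA
  rw [← take_append_drop p A, ← append_assoc] at ht
  obtain ⟨htB, hs⟩ := append_inj' ht (by simp only [length_append, length_drop] at hp ⊢; omega)
  exact ⟨by rw [hs], htB ▸ suffix_append t _⟩

lemma suffix_append_drop_of_prefix_of_suffix (hA : y <+: A) (hB : y <:+ B) :
    A <:+ B ++ A.drop y.length := by
  obtain ⟨s, rfl⟩ := hA
  obtain ⟨t, rfl⟩ := hB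
  rw [drop_left, append_assoc]
  exact suffix_append t _

lemma drop_prefix_of_prefix_of_suffix (hy : y <+: A) (hx : x <:+ A)
    (h : A.length ≤ x.length + y.length) : y.drop (A.length - x.length) <+: x := by
  obtain ⟨s, rfl⟩ := hy
  have hx' := suffix_iff_eq_drop.1 hx
  rw [drop_append_of_le_length (by simp only [length_append] at h ⊢; omega)] at hx'
  exact ⟨s, hx'.symm⟩

end List

variable {k : ℕ} {u v w b c x y A B : List (Fin k)}

lemma mem_words {n : ℕ} : w ∈ Words k n ↔ w.length = n := by
  simp only [Words, Finset.mem_image, Finset.mem_univ, true_and]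
  constructor
  · rintro ⟨f, rfl⟩
    exact List.length_ofFn
  · rintro rfl
    exact ⟨w.get, List.ofFn_get w⟩

lemma card_words (n : ℕ) : (Words k n).card = k ^ n := by
  rw [Words, Finset.card_image_of_injective _ List.ofFn_injective, Finset.card_univ,
    Fintype.card_fun, Fintype.card_fin, Fintype.card_fin]

lemma Unbordered.eq_nil_of_prefix_of_suffix (hw : Unbordered w) (hp : c <+: w) (hs : c <:+ w)
    (hlt : c.length < w.length) : c = [] := by
  by_contra hc
  exact hw c ⟨hc, by rintro rfl; exact lt_irrefl _ hlt, hp, hs⟩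

lemma isLeftBorder_iff_isRightBorder_swap : IsLeftBorder u v b ↔ IsRightBorder v u b := by
  unfold IsLeftBorder IsRightBorder
  tauto

lemma isRightBorder_of_length_lt (hb : b ≠ []) (hu : b <:+ u) (hv : b <+: v)
    (hlu : b.length < u.length) (hlv : b.length < v.length) : IsRightBorder u v b :=
  ⟨hb, hu, by rintro rfl; exact lt_irrefl _ hlu, hv, by rintro rfl; exact lt_irrefl _ hlv⟩

lemma IsBorder.length_lt_s8 (hc : IsBorder w c) : c.length < w.length :=
  lt_of_le_of_ne hc.2.2.1.length_le fun h => hc.2.1 (hc.2.2.1.eq_of_length h)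

namespace IsRightBorder

lemma length_lt_left (hb : IsRightBorder u v b) : b.length < u.length :=
  lt_of_le_of_ne hb.2.1.length_le fun h => hb.2.2.1 (hb.2.1.eq_of_length h)

lemma length_lt_right (hb : IsRightBorder u v b) : b.length < v.length :=
  lt_of_le_of_ne hb.2.2.2.1.length_le fun h => hb.2.2.2.2 (hb.2.2.2.1.eq_of_length h)

lemma of_isBorder_s8 (hb : IsRightBorder u v b) (hc : IsBorder b c) : IsRightBorder u v c :=
  isRightBorder_of_length_lt hc.1 (hc.2.2.2.trans hb.2.1) (hc.2.2.1.trans hb.2.2.2.1)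
    (hc.length_lt_s8.trans hb.length_lt_left) (hc.length_lt_s8.trans hb.length_lt_right)

lemma isBorder_of_length_lt (hb : IsRightBorder u v b) (hx : IsRightBorder u v x)
    (h : b.length < x.length) : IsBorder x b :=
  ⟨hb.1, by rintro rfl; exact lt_irrefl _ h,
    List.prefix_of_prefix_length_le hb.2.2.2.1 hx.2.2.2.1 h.le,
    List.suffix_of_suffix_length_le hb.2.1 hx.2.1 h.le⟩

lemma exists_unbordered (hb : IsRightBorder u v b) :
    ∃ x, IsRightBorder u v x ∧ Unbordered x := by
  induction hn : b.length using Nat.strong_induction_on generalizing b with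
  | _ n ih =>
    by_cases hub : Unbordered b
    · exact ⟨b, hb, hub⟩
    · obtain ⟨c, hc⟩ := _root_.not_forall_not.1 hub
      exact ih c.length (hn ▸ hc.length_lt_s8) (hb.of_isBorder_s8 hc) rfl

lemma eq_of_unbordered (hx : IsRightBorder u v x) (hy : IsRightBorder u v y)
    (hxu : Unbordered x) (hyu : Unbordered y) : x = y := by
  rcases lt_trichotomy x.length y.length with h | h | h
  · exact (hyu x (hx.isBorder_of_length_lt hy h)).elim
  · exact (List.suffix_of_suffix_length_le hx.2.1 hy.2.1 h.le).eq_of_length h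
  · exact (hxu y (hy.isBorder_of_length_lt hx h)).elim

end IsRightBorder

lemma exists_isRightBorder_iff_exists_unbordered :
    (∃ b, IsRightBorder u v b) ↔ ∃ x, IsRightBorder u v x ∧ Unbordered x :=
  ⟨fun ⟨_, hb⟩ => hb.exists_unbordered, fun ⟨x, hx, _⟩ => ⟨x, hx⟩⟩

lemma mutuallyBordered_iff : MutuallyBordered u v ↔
    (∃ A, IsRightBorder u v A ∧ Unbordered A) ∧ ∃ B, IsRightBorder v u B ∧ Unbordered B := by
  simp only [MutuallyBordered, isLeftBorder_iff_isRightBorder_swap,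
    exists_isRightBorder_iff_exists_unbordered]

lemma lso_eq_length (hx : IsRightBorder u v x) (hxu : Unbordered x) : lso u v = x.length :=
  le_antisymm (Nat.sInf_le ⟨x, hx, rfl⟩) <| le_csInf ⟨_, x, hx, rfl⟩ fun _ ⟨b, hb, hlen⟩ =>
    hlen ▸ not_lt.1 fun h => hxu b (hb.isBorder_of_length_lt hx h)

lemma isRightBorder_append_append (hx : x ≠ []) (hy : y ≠ []) (a b : List (Fin k)) :
    IsRightBorder (y ++ a ++ x) (x ++ b ++ y) x := by
  have hy' := List.length_pos_iff.2 hy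
  refine isRightBorder_of_length_lt hx (List.suffix_append _ _)
    (List.append_assoc x b y ▸ List.prefix_append _ _) ?_ ?_ <;>
  · simp only [List.length_append]
    omega

noncomputable def disjointBorderPairs (k n : ℕ) : Finset (List (Fin k) × List (Fin k)) :=
  (Words k n ×ˢ Words k n).filter fun q =>
    MutuallyBordered q.1 q.2 ∧ lso q.1 q.2 + lso q.2 q.1 ≤ n

noncomputable def disjointBorderData (k n : ℕ) :
    Finset (Σ _ : ℕ, Σ _ : ℕ, List (Fin k) × List (Fin k) × List (Fin k) × List (Fin k)) :=
  (Icc 1 (n - 1)).sigma fun i => (Icc 1 (n - i)).sigma fun j =>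
    (Words k i).filter Unbordered ×ˢ (Words k j).filter Unbordered ×ˢ
      Words k (n - i - j) ×ˢ Words k (n - i - j)

def glueDisjoint :
    (Σ _ : ℕ, Σ _ : ℕ, List (Fin k) × List (Fin k) × List (Fin k) × List (Fin k)) →
      List (Fin k) × List (Fin k)
  | ⟨_, _, x, y, a, b⟩ => (y ++ a ++ x, x ++ b ++ y)

lemma card_disjointBorderData (n : ℕ) :
    (disjointBorderData k n).card = ∑ i ∈ Icc 1 (n - 1), ∑ j ∈ Icc 1 (n - i),
      UB k i * UB k j * k ^ (2 * n - 2 * (i + j)) := by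
  simp only [disjointBorderData, card_sigma, card_product, card_words]
  refine sum_congr rfl fun i _ => sum_congr rfl fun j _ => ?_
  rw [UB, UB, ← pow_add, mul_assoc, show n - i - j + (n - i - j) = 2 * n - 2 * (i + j) by omega]

lemma mapsTo_glueDisjoint (n : ℕ) :
    Set.MapsTo (glueDisjoint (k := k)) ↑(disjointBorderData k n) ↑(disjointBorderPairs k n) := by
  rintro ⟨i, j, x, y, a, b⟩ ht
  simp only [mem_coe, disjointBorderData, mem_sigma, mem_Icc, mem_product, mem_filter,
    mem_words] at ht
  obtain ⟨⟨hi, hin⟩, ⟨hj, hjn⟩, ⟨rfl, hx⟩, ⟨rfl, hy⟩, ha, hb⟩ := ht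
  have hxr := isRightBorder_append_append (List.ne_nil_of_length_pos hi)
    (List.ne_nil_of_length_pos hj) a b
  have hyr := isRightBorder_append_append (List.ne_nil_of_length_pos hj)
    (List.ne_nil_of_length_pos hi) b a
  simp only [glueDisjoint, mem_coe, disjointBorderPairs, mem_filter, mem_product, mem_words,
    List.length_append]
  refine ⟨⟨by omega, by omega⟩, mutuallyBordered_iff.2 ⟨⟨x, hxr, hx⟩, y, hyr, hy⟩, ?_⟩
  rw [lso_eq_length hxr hx, lso_eq_length hyr hy]
  omega

lemma injOn_glueDisjoint (n : ℕ) :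
    Set.InjOn (glueDisjoint (k := k)) ↑(disjointBorderData k n) := by
  rintro ⟨i, j, x, y, a, b⟩ ht ⟨i', j', x', y', a', b'⟩ ht' h
  simp only [mem_coe, disjointBorderData, mem_sigma, mem_Icc, mem_product, mem_filter,
    mem_words] at ht ht'
  obtain ⟨⟨hi, -⟩, ⟨hj, -⟩, ⟨rfl, hx⟩, ⟨rfl, hy⟩, -⟩ := ht
  obtain ⟨⟨hi', -⟩, ⟨hj', -⟩, ⟨rfl, hx'⟩, ⟨rfl, hy'⟩, -⟩ := ht'
  simp only [glueDisjoint, Prod.mk.injEq] at h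
  obtain ⟨hu, hv⟩ := h
  have hx0 := List.ne_nil_of_length_pos hi
  have hy0 := List.ne_nil_of_length_pos hj
  have hx0' := List.ne_nil_of_length_pos hi'
  have hy0' := List.ne_nil_of_length_pos hj'
  obtain rfl : x = x' := (isRightBorder_append_append hx0 hy0 a b).eq_of_unbordered
    (hu ▸ hv ▸ isRightBorder_append_append hx0' hy0' a' b') hx hx'
  obtain rfl : y = y' := (isRightBorder_append_append hy0 hx0 b a).eq_of_unbordered
    (hu ▸ hv ▸ isRightBorder_append_append hy0' hx0' b' a') hy hy'
  obtain rfl : a = a' := List.append_cancel_left (List.append_cancel_right hu)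
  obtain rfl : b = b' := List.append_cancel_left (List.append_cancel_right hv)
  rfl

lemma surjOn_glueDisjoint (n : ℕ) :
    Set.SurjOn (glueDisjoint (k := k)) ↑(disjointBorderData k n) ↑(disjointBorderPairs k n) := by
  rintro ⟨u, v⟩ huv
  simp only [mem_coe, disjointBorderPairs, mem_filter, mem_product, mem_words] at huv
  obtain ⟨⟨hu, hv⟩, hmb, hlso⟩ := huv
  obtain ⟨⟨A, hA, hAu⟩, B, hB, hBu⟩ := mutuallyBordered_iff.1 hmb
  rw [lso_eq_length hA hAu, lso_eq_length hB hBu] at hlso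
  have hA0 := List.length_pos_iff.2 hA.1
  have hB0 := List.length_pos_iff.2 hB.1
  have hAn := hA.length_lt_left
  obtain ⟨a, rfl⟩ := List.exists_eq_append_append_of_prefix_of_suffix hB.2.2.2.1 hA.2.1 (by omega)
  obtain ⟨b, rfl⟩ := List.exists_eq_append_append_of_prefix_of_suffix hA.2.2.2.1 hB.2.1 (by omega)
  refine ⟨⟨A.length, B.length, A, B, a, b⟩, ?_, rfl⟩
  simp only [List.length_append] at hu hv hAn
  simp only [mem_coe, disjointBorderData, mem_sigma, mem_Icc, mem_product, mem_filter, mem_words]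
  exact ⟨⟨hA0, by omega⟩, ⟨hB0, by omega⟩, ⟨trivial, hAu⟩, ⟨trivial, hBu⟩, by omega, by omega⟩

lemma isRightBorder_append_drop (hA : A ≠ []) (hyA : y <+: A) (hyB : y <:+ B)
    (hlt : y.length < B.length) :
    IsRightBorder (B ++ A.drop y.length) (A ++ B.drop y.length) A := by
  have hyA' := hyA.length_le
  refine isRightBorder_of_length_lt hA (List.suffix_append_drop_of_prefix_of_suffix hyA hyB)
    (List.prefix_append _ _) ?_ ?_ <;>
  · simp only [List.length_append, List.length_drop]
    omega

lemma two_mul_le_length_of_overlap (hB : Unbordered B) (hyA : y <+: A) (hxA : x <:+ A)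
    (hxB : x <+: B) (hyB : y <:+ B) (hxy : x.length = y.length) (hlt : x.length < B.length) :
    2 * x.length ≤ A.length := by
  by_contra h
  -- the part where the prefix `y` and the suffix `x` of `A` overlap would be a border of `B`
  have hc := hB.eq_nil_of_prefix_of_suffix
    ((List.drop_prefix_of_prefix_of_suffix hyA hxA (by omega)).trans hxB)
    ((List.drop_suffix _ y).trans hyB) (by simp only [List.length_drop]; omega)
  have := congrArg List.length hc
  simp only [List.length_drop, List.length_nil] at this
  omega

lemma Unbordered.ne_of_prefix_of_suffix (hA : Unbordered A) (hx : x ≠ []) (hyA : y <+: A)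
    (hxA : x <:+ A) (hlt : x.length < A.length) : x ≠ y := by
  rintro rfl
  exact hx (hA.eq_nil_of_prefix_of_suffix hyA hxA hlt)

lemma mutuallyUnbordered_of_overlap (hA : Unbordered A) (hB : Unbordered B) (hyA : y <+: A)
    (hxA : x <:+ A) (hxB : x <+: B) (hyB : y <:+ B) (hxA' : x.length < A.length)
    (hxB' : x.length < B.length) : MutuallyUnbordered x y := by
  refine ⟨?_, ?_⟩
  · rintro ⟨c, hc, hcx, -, hcy, -⟩
    exact hc (hA.eq_nil_of_prefix_of_suffix (hcy.trans hyA) (hcx.trans hxA)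
      (hcx.length_le.trans_lt hxA'))
  · rintro ⟨c, hc, hcx, -, hcy, -⟩
    exact hc (hB.eq_nil_of_prefix_of_suffix (hcx.trans hxB) (hcy.trans hyB)
      (hcx.length_le.trans_lt hxB'))

noncomputable def overlappingBorderPairs (k n : ℕ) : Finset (List (Fin k) × List (Fin k)) :=
  (Words k n ×ˢ Words k n).filter fun q =>
    MutuallyBordered q.1 q.2 ∧ ¬ lso q.1 q.2 + lso q.2 q.1 ≤ n

noncomputable def overlappingBorderData (k n : ℕ) :
    Finset (Σ _ : ℕ, Σ _ : List (Fin k) × List (Fin k), Σ _ : ℕ, List (Fin k) × List (Fin k)) :=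
  (Icc 1 (n / 3)).sigma fun p =>
    ((Words k p ×ˢ Words k p).filter fun q => q.1 ≠ q.2 ∧ MutuallyUnbordered q.1 q.2).sigma fun q =>
      (Icc (2 * p) (n - p)).sigma fun l =>
        (Words k l).filter (fun w => Unbordered w ∧ q.2 <+: w ∧ q.1 <:+ w) ×ˢ
          (Words k (n - l + p)).filter (fun w => Unbordered w ∧ q.1 <+: w ∧ q.2 <:+ w)

def glueOverlapping :
    (Σ _ : ℕ, Σ _ : List (Fin k) × List (Fin k), Σ _ : ℕ, List (Fin k) × List (Fin k)) →
      List (Fin k) × List (Fin k)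
  | ⟨p, _, _, A, B⟩ => (B ++ A.drop p, A ++ B.drop p)

lemma card_overlappingBorderData (n : ℕ) :
    (overlappingBorderData k n).card = ∑ p ∈ Icc 1 (n / 3),
      ∑ q ∈ (Words k p ×ˢ Words k p).filter (fun q => q.1 ≠ q.2 ∧ MutuallyUnbordered q.1 q.2),
        ∑ l ∈ Icc (2 * p) (n - p), G q.2 q.1 l * G q.1 q.2 (n - l + p) := by
  simp only [overlappingBorderData, card_sigma, card_product]
  rfl

lemma isRightBorder_of_mem_overlappingBorderData {n p l : ℕ}
    (ht : ⟨p, (x, y), l, (A, B)⟩ ∈ overlappingBorderData k n) :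
    IsRightBorder (B ++ A.drop p) (A ++ B.drop p) A ∧
      IsRightBorder (A ++ B.drop p) (B ++ A.drop p) B := by
  simp only [overlappingBorderData, mem_sigma, mem_Icc, mem_product, mem_filter,
    mem_words] at ht
  obtain ⟨⟨hp, -⟩, ⟨⟨hx, rfl⟩, -⟩, ⟨hpl, hln⟩, ⟨rfl, -, hyA, hxA⟩, ⟨hB, -, hxB, hyB⟩⟩ := ht
  have hA0 : A ≠ [] := List.ne_nil_of_length_pos (by omega)
  have hB0 : B ≠ [] := List.ne_nil_of_length_pos (by omega)
  exact ⟨isRightBorder_append_drop hA0 hyA hyB (by omega),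
    hx ▸ isRightBorder_append_drop hB0 hxB hxA (by omega)⟩

lemma mapsTo_glueOverlapping (n : ℕ) :
    Set.MapsTo (glueOverlapping (k := k)) ↑(overlappingBorderData k n)
      ↑(overlappingBorderPairs k n) := by
  rintro ⟨p, ⟨x, y⟩, l, A, B⟩ ht
  rw [mem_coe] at ht
  obtain ⟨hA, hB⟩ := isRightBorder_of_mem_overlappingBorderData ht
  simp only [overlappingBorderData, mem_sigma, mem_Icc, mem_product, mem_filter,
    mem_words] at ht
  obtain ⟨⟨hp, -⟩, -, ⟨hpl, hln⟩, ⟨rfl, hAu, -⟩, ⟨hBl, hBu, -⟩⟩ := ht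
  simp only [glueOverlapping, mem_coe, overlappingBorderPairs, mem_filter, mem_product,
    mem_words, List.length_append, List.length_drop]
  refine ⟨⟨by omega, by omega⟩, mutuallyBordered_iff.2 ⟨⟨A, hA, hAu⟩, B, hB, hBu⟩, ?_⟩
  rw [lso_eq_length hA hAu, lso_eq_length hB hBu]
  omega

lemma injOn_glueOverlapping (n : ℕ) :
    Set.InjOn (glueOverlapping (k := k)) ↑(overlappingBorderData k n) := by
  rintro ⟨p, ⟨x, y⟩, l, A, B⟩ ht ⟨p', ⟨x', y'⟩, l', A', B'⟩ ht' h
  rw [mem_coe] at ht ht'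
  obtain ⟨hA, hB⟩ := isRightBorder_of_mem_overlappingBorderData ht
  obtain ⟨hA', hB'⟩ := isRightBorder_of_mem_overlappingBorderData ht'
  simp only [overlappingBorderData, mem_sigma, mem_Icc, mem_product, mem_filter,
    mem_words] at ht ht'
  obtain ⟨-, ⟨⟨hx, hy⟩, -⟩, ⟨hpl, -⟩, ⟨rfl, hAu, hyA, -⟩, ⟨-, hBu, hxB, -⟩⟩ := ht
  obtain ⟨-, ⟨⟨hx', hy'⟩, -⟩, ⟨hpl', -⟩, ⟨rfl, hAu', hyA', -⟩, ⟨-, hBu', hxB', -⟩⟩ := ht'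
  simp only [glueOverlapping, Prod.mk.injEq] at h
  obtain ⟨hu, hv⟩ := h
  obtain rfl : A = A' := hA.eq_of_unbordered (hu ▸ hv ▸ hA') hAu hAu'
  obtain rfl : B = B' := hB.eq_of_unbordered (hu ▸ hv ▸ hB') hBu hBu'
  obtain rfl : p = p' := by
    have := congrArg List.length hu
    simp only [List.length_append, List.length_drop] at this
    omega
  obtain rfl : x = x' := by
    rw [List.prefix_iff_eq_take.1 hxB, List.prefix_iff_eq_take.1 hxB', hx, hx']
  obtain rfl : y = y' := by
    rw [List.prefix_iff_eq_take.1 hyA, List.prefix_iff_eq_take.1 hyA', hy, hy']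
  rfl

lemma surjOn_glueOverlapping (n : ℕ) :
    Set.SurjOn (glueOverlapping (k := k)) ↑(overlappingBorderData k n)
      ↑(overlappingBorderPairs k n) := by
  rintro ⟨u, v⟩ huv
  simp only [mem_coe, overlappingBorderPairs, mem_filter, mem_product, mem_words,
    not_le] at huv
  obtain ⟨⟨hu, hv⟩, hmb, hlso⟩ := huv
  obtain ⟨⟨A, hA, hAu⟩, B, hB, hBu⟩ := mutuallyBordered_iff.1 hmb
  rw [lso_eq_length hA hAu, lso_eq_length hB hBu] at hlso
  set p := A.length + B.length - n
  obtain ⟨rfl, hyB⟩ := List.eq_append_drop_of_prefix_of_suffix hB.2.2.2.1 hA.2.1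
    (p := p) (by omega)
  obtain ⟨rfl, hxA⟩ := List.eq_append_drop_of_prefix_of_suffix hA.2.2.2.1 hB.2.1
    (p := p) (by omega)
  refine ⟨⟨p, (B.take p, A.take p), A.length, (A, B)⟩, ?_, rfl⟩
  have hAn := hA.length_lt_left
  have hBn := hB.length_lt_left
  have hxl : (B.take p).length = p := List.length_take_of_le (by omega)
  have hyl : (A.take p).length = p := List.length_take_of_le (by omega)
  have hA2 := two_mul_le_length_of_overlap hBu (List.take_prefix p A) hxA (List.take_prefix p B)
    hyB (hxl.trans hyl.symm) (by omega)
  have hB2 := two_mul_le_length_of_overlap hAu (List.take_prefix p B) hyB (List.take_prefix p A)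
    hxA (hyl.trans hxl.symm) (by omega)
  simp only [List.length_append, List.length_drop] at hu hAn hBn
  simp only [mem_coe, overlappingBorderData, mem_sigma, mem_Icc, mem_product, mem_filter,
    mem_words]
  refine ⟨⟨by omega, (Nat.le_div_iff_mul_le three_pos).2 (by omega)⟩,
    ⟨⟨hxl, hyl⟩, ?_, ?_⟩, ⟨hxl ▸ hA2, by omega⟩, ⟨trivial, hAu, List.take_prefix p A, hxA⟩,
    ⟨by omega, hBu, List.take_prefix p B, hyB⟩⟩
  · exact hAu.ne_of_prefix_of_suffix (List.ne_nil_of_length_pos (by omega))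
      (List.take_prefix p A) hxA (by omega)
  · exact mutuallyUnbordered_of_overlap hAu hBu (List.take_prefix p A) hxA
      (List.take_prefix p B) hyB (by omega) (by omega)

theorem M_eq_sum (k n : ℕ) :
    M k n =
      (∑ i ∈ Icc 1 (n - 1), ∑ j ∈ Icc 1 (n - i),
        UB k i * UB k j * k ^ (2 * n - 2 * (i + j))) +
      (∑ p ∈ Icc 1 (n / 3),
        ∑ q ∈ (Words k p ×ˢ Words k p).filter (fun q => q.1 ≠ q.2 ∧ MutuallyUnbordered q.1 q.2),
          ∑ l ∈ Icc (2 * p) (n - p), G q.2 q.1 l * G q.1 q.2 (n - l + p)) := by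
  have hsplit : M k n = (disjointBorderPairs k n).card + (overlappingBorderPairs k n).card := by
    rw [M, ← card_filter_add_card_filter_not (fun q => lso q.1 q.2 + lso q.2 q.1 ≤ n),
      filter_filter, filter_filter, disjointBorderPairs, overlappingBorderPairs]
  rw [hsplit, ← card_disjointBorderData, ← card_overlappingBorderData,
    card_nbij _ (mapsTo_glueDisjoint n) (injOn_glueDisjoint n) (surjOn_glueDisjoint n),
    card_nbij _ (mapsTo_glueOverlapping n) (injOn_glueOverlapping n) (surjOn_glueOverlapping n)]

theorem stmt8_general (k n : ℕ) :
    M k n =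
      (∑ i ∈ Finset.Icc 1 (n - 1), ∑ j ∈ Finset.Icc 1 (n - i),
        UB k i * UB k j * k ^ (2 * n - 2 * (i + j))) +
      (∑ p ∈ Finset.Icc 1 (n / 3),
        ∑ q ∈ (Words k p ×ˢ Words k p).filter
            (fun q => q.1 ≠ q.2 ∧ MutuallyUnbordered q.1 q.2),
          ∑ l ∈ Finset.Icc (2 * p) (n - p),
            G q.2 q.1 l * G q.1 q.2 (n - l + p)) ∧
    M k 1 = 0 :=
  ⟨M_eq_sum k n, by simpa using M_eq_sum k 1⟩

theorem stmt8 (k n : ℕ) (hk : 1 ≤ k) (hn : 1 ≤ n) :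
    M k n =
      (∑ i ∈ Finset.Icc 1 (n - 1), ∑ j ∈ Finset.Icc 1 (n - i),
        UB k i * UB k j * k ^ (2 * n - 2 * (i + j))) +
      (∑ p ∈ Finset.Icc 1 (n / 3),
        ∑ q ∈ (Words k p ×ˢ Words k p).filter
            (fun q => q.1 ≠ q.2 ∧ MutuallyUnbordered q.1 q.2),
          ∑ l ∈ Finset.Icc (2 * p) (n - p),
            G q.2 q.1 l * G q.1 q.2 (n - l + p)) ∧
    M k 1 = 0 :=
  stmt8_general k n
end
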